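/- arXiv:1209.5170 — 2 statements merged into one kernel-verified Lean document; each statement's English description precedes it below -/
import Mathlib

section
/- Fix k ≥ 1 and distinct reals 2 > β_1 > β_2 > … > β_k ≥ 0. For v̄ = (v_2, …, v_{2k}) ∈ (1,∞)^{2k−1}, define the 2k × 2k matrix Σ(v̄) by Σ(v̄)_{l,i} = v_l^{−β_i} for 1 ≤ i ≤ k and Σ(v̄)_{l,i} = v_l^{−β_{i−k}} · log v_l for k+1 ≤ i ≤ 2k, where v_1 = 1. Then the set of v̄ ∈ (1,∞)^{2k−1} for which Σ(v̄) is not invertible has (2k−1)-dimensional Lebesgue measure zero. -/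
open MeasureTheory

/-- The `2k × 2k` matrix `Σ(vb)` with entries `Σ_{l,i} = v_l^{-β_i}` for `i < k` and
`Σ_{l,i} = v_l^{-β_{i-k}} · log v_l` for `k ≤ i < 2k` (indices `0`-based). -/
noncomputable def sigmaMatrix (k : ℕ) (β : ℕ → ℝ) (v : ℕ → ℝ) :
    Matrix (Fin (2 * k)) (Fin (2 * k)) ℝ :=
  Matrix.of fun l i =>
    if (i : ℕ) < k then v (l : ℕ) ^ (-(β (i : ℕ)))
    else v (l : ℕ) ^ (-(β ((i : ℕ) - k))) * Real.log (v (l : ℕ))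

/-!
Substituting `v = exp x`, a linear form evaluated on the row `Σ(v)` becomes the exponential
polynomial `∑ i, exp (-β i * x) * (a i + c i * x)`. Unless all coefficients vanish, this does not
vanish for all large `x` (divide by its slowest decaying term and let `x → ∞`), so, being
analytic, it has isolated, hence null, zero set. Thus a random row avoids any fixed hyperplane
almost surely, and Fubini's theorem, adding one row at a time, shows that the rows
`Σ(1), Σ(v₂), …, Σ(v_{2k})` are almost surely linearly independent.
-/

open Filter Topology Real Module

theorem eq_zero_of_tendsto_add_mul_atTop {a c : ℝ}
    (h : Tendsto (fun x => a + c * x) atTop (𝓝 0)) : a = 0 ∧ c = 0 := by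
  have hc : c = 0 := by
    have hshift := h.comp (tendsto_atTop_add_const_right atTop 1 tendsto_id)
    have hdiff := hshift.sub h
    rw [sub_zero] at hdiff
    refine tendsto_const_nhds_iff.1 (hdiff.congr fun x => ?_)
    simp only [Function.comp_apply, id]
    ring
  subst hc
  exact ⟨by simpa using h, rfl⟩

theorem tendsto_exp_mul_mul_add_mul_atTop {b : ℝ} (hb : b < 0) (a c : ℝ) :
    Tendsto (fun x => exp (b * x) * (a + c * x)) atTop (𝓝 0) := by
  have h := fun s => tendsto_rpow_mul_exp_neg_mul_atTop_nhds_zero s (-b) (neg_pos.2 hb)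
  simpa using (((h 0).const_mul a).add ((h 1).const_mul c)).congr fun x => by
    simp only [rpow_zero, rpow_one, neg_neg]
    ring

theorem eq_zero_of_sum_exp_mul_add_mul_eventually_eq_zero {ι : Type*} (s : Finset ι)
    {b : ι → ℝ} (hb : Set.InjOn b s) {a c : ι → ℝ}
    (h : ∀ᶠ x in atTop, ∑ i ∈ s, exp (b i * x) * (a i + c i * x) = 0) :
    ∀ i ∈ s, a i = 0 ∧ c i = 0 := by
  classical
  induction s using Finset.induction_on_max_value b with
  | empty => simp
  | insert j s hj hmax ih =>
    have hlt : ∀ i ∈ s, b i - b j < 0 := fun i hi => sub_neg.2 <| (hmax i hi).lt_of_ne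
      fun e => hj (hb (Finset.mem_insert_of_mem hi) (Finset.mem_insert_self j s) e ▸ hi)
    have hlead : Tendsto (fun x => a j + c j * x) atTop (𝓝 0) := by
      have htail := tendsto_finsetSum s fun i hi =>
        tendsto_exp_mul_mul_add_mul_atTop (hlt i hi) (a i) (c i)
      rw [Finset.sum_const_zero] at htail
      refine (neg_zero (G := ℝ) ▸ htail.neg).congr' ?_
      filter_upwards [h] with x hx
      rw [Finset.sum_insert hj] at hx
      have hfactor : exp (b j * x) * ((a j + c j * x) +
          ∑ i ∈ s, exp ((b i - b j) * x) * (a i + c i * x)) = 0 := by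
        rw [← hx, mul_add, Finset.mul_sum]
        congr 1
        refine Finset.sum_congr rfl fun i _ => ?_
        rw [← mul_assoc, ← exp_add]
        ring_nf
      linarith [(mul_eq_zero.1 hfactor).resolve_left (exp_pos _).ne']
    obtain ⟨ha, hc⟩ := eq_zero_of_tendsto_add_mul_atTop hlead
    have hs : ∀ᶠ x in atTop, ∑ i ∈ s, exp (b i * x) * (a i + c i * x) = 0 := by
      filter_upwards [h] with x hx
      simpa [Finset.sum_insert hj, ha, hc] using hx
    intro i hi
    rcases Finset.mem_insert.1 hi with rfl | hi
    · exact ⟨ha, hc⟩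
    · exact ih (hb.mono (Finset.subset_insert j s)) hs i hi

section LinearIndependence

variable {α : Type*} [MeasurableSpace α] {μ : Measure α} [SigmaFinite μ]

theorem ae_pi_of_ae_ae_snoc {n : ℕ} {P : (Fin (n + 1) → α) → Prop}
    (hP : MeasurableSet {w | P w})
    (h : ∀ᵐ w ∂(Measure.pi fun _ : Fin n => μ), ∀ᵐ t ∂μ, P (Fin.snoc w t)) :
    ∀ᵐ w ∂(Measure.pi fun _ => μ), P w := by
  set e := MeasurableEquiv.piFinSuccAbove (fun _ : Fin (n + 1) => α) (Fin.last n)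
  have he : ∀ t w, e.symm (t, w) = Fin.snoc w t := fun t w => by
    simp [e, MeasurableEquiv.piFinSuccAbove_symm_apply, Fin.snocEquiv]
  have hprod : ∀ᵐ p ∂μ.prod (Measure.pi fun _ : Fin n => μ), P (e.symm p) := by
    have hP' : MeasurableSet {p : α × (Fin n → α) | P (e.symm p)} := e.symm.measurable hP
    rw [Measure.ae_prod_iff_ae_ae hP', Measure.ae_ae_comm (by simpa using hP')]
    simpa only [he] using h
  have hqmp := (measurePreserving_piFinSuccAbove (fun _ => μ) (Fin.last n)).quasiMeasurePreserving
  filter_upwards [hqmp.ae hprod] with w hw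
  rwa [e.symm_apply_apply] at hw

variable {E : Type*} [NormedAddCommGroup E] [NormedSpace ℝ E] [FiniteDimensional ℝ E]
  [MeasurableSpace E] [BorelSpace E]

theorem measurableSet_setOf_linearIndependent_comp_cons {f : α → E} (hf : Measurable f) (t₀ : α)
    (m : ℕ) : MeasurableSet {w : Fin m → α | LinearIndependent ℝ (f ∘ Fin.cons t₀ w)} :=
  isOpen_setOfPred_linearIndependent.measurableSet.preimage <|
    measurable_pi_lambda _ fun i => hf.comp (Fin.cases measurable_const measurable_pi_apply i)

theorem ae_linearIndependent_comp_cons {f : α → E} (hf : Measurable f)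
    (havoid : ∀ V : Submodule ℝ E, V ≠ ⊤ → ∀ᵐ t ∂μ, f t ∉ V) {t₀ : α} (ht₀ : f t₀ ≠ 0) :
    ∀ {m : ℕ}, m < finrank ℝ E →
      ∀ᵐ w ∂(Measure.pi fun _ : Fin m => μ), LinearIndependent ℝ (f ∘ Fin.cons t₀ w)
  | 0, _ => .of_forall fun w => by
    simpa [Fin.comp_cons, linearIndependent_finCons] using ht₀
  | m + 1, hm => by
    refine ae_pi_of_ae_ae_snoc (measurableSet_setOf_linearIndependent_comp_cons hf t₀ _) ?_
    filter_upwards [ae_linearIndependent_comp_cons hf havoid ht₀ (by omega)] with w hw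
    have hspan : Submodule.span ℝ (Set.range (f ∘ Fin.cons t₀ w)) ≠ ⊤ := by
      intro htop
      have := finrank_span_eq_card hw
      rw [htop, finrank_top, Fintype.card_fin] at this
      omega
    filter_upwards [havoid _ hspan] with t ht
    rw [Fin.cons_snoc_eq_snoc_cons, Fin.comp_snoc, linearIndependent_finSnoc]
    exact ⟨hw, ht⟩

end LinearIndependence

section SigmaRow

noncomputable def sigmaRow (k : ℕ) (β : ℕ → ℝ) (t : ℝ) : Fin (2 * k) → ℝ := fun i =>
  if (i : ℕ) < k then t ^ (-(β i)) else t ^ (-(β ((i : ℕ) - k))) * log t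

def finSumSelfEquiv (k : ℕ) : Fin k ⊕ Fin k ≃ Fin (2 * k) :=
  finSumFinEquiv.trans (finCongr (two_mul k).symm)

variable {k : ℕ} {β : ℕ → ℝ}

theorem measurable_sigmaRow : Measurable (sigmaRow k β) :=
  measurable_pi_lambda _ fun i => by
    unfold sigmaRow
    split_ifs <;> fun_prop

theorem sigmaRow_one_ne_zero (hk : 1 ≤ k) : sigmaRow k β 1 ≠ 0 := fun h => by
  simpa [sigmaRow, show 0 < k by omega] using congrFun h ⟨0, by omega⟩

theorem dotProduct_sigmaRow_exp (a : Fin (2 * k) → ℝ) (x : ℝ) :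
    a ⬝ᵥ sigmaRow k β (exp x) = ∑ i : Fin k,
      exp (-β i * x) * (a (finSumSelfEquiv k (.inl i)) + a (finSumSelfEquiv k (.inr i)) * x) := by
  rw [dotProduct, ← (finSumSelfEquiv k).sum_comp, Fintype.sum_sum_type, ← Finset.sum_add_distrib]
  refine Finset.sum_congr rfl fun i _ => ?_
  simp only [finSumSelfEquiv, Equiv.trans_apply, finSumFinEquiv_apply_left,
    finSumFinEquiv_apply_right, finCongr_apply, sigmaRow, Fin.val_cast, Fin.val_castAdd,
    Fin.natAdd_eq_addNat, Fin.val_addNat, Fin.is_lt, add_lt_iff_neg_right, not_lt_zero, ↓reduceIte,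
    add_tsub_cancel_right, ← exp_mul, mul_neg, mul_comm, log_exp]
  ring

theorem ae_dotProduct_sigmaRow_ne_zero (hβ : Set.InjOn β (Set.Iio k)) {a : Fin (2 * k) → ℝ}
    (ha : a ≠ 0) : ∀ᵐ t ∂(volume.restrict (Set.Ioi 1)), a ⬝ᵥ sigmaRow k β t ≠ 0 := by
  have hanalytic : AnalyticOnNhd ℝ (fun t => a ⬝ᵥ sigmaRow k β t) (Set.Ioi 1) := fun t ht => by
    have hexp : AnalyticAt ℝ (fun x => a ⬝ᵥ sigmaRow k β (exp x)) (log t) := by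
      simp_rw [dotProduct_sigmaRow_exp]
      fun_prop
    refine (hexp.comp (analyticAt_log (zero_lt_one.trans ht))).congr ?_
    filter_upwards [Ioi_mem_nhds (zero_lt_one.trans ht)] with s hs
    rw [Function.comp_apply, exp_log hs]
  rcases hanalytic.eqOn_zero_or_eventually_ne_zero_of_preconnected isPreconnected_Ioi with
    hzero | hne
  · have hcoeff := eq_zero_of_sum_exp_mul_add_mul_eventually_eq_zero Finset.univ
      (b := fun i : Fin k => -β i) (fun i _ j _ hij => Fin.ext (hβ i.isLt j.isLt (neg_inj.1 hij)))
      (a := fun i => a (finSumSelfEquiv k (.inl i))) (c := fun i => a (finSumSelfEquiv k (.inr i)))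
      ?_
    · refine absurd (funext fun j => ?_) ha
      obtain ⟨i | i, rfl⟩ := (finSumSelfEquiv k).surjective j
      exacts [(hcoeff i (Finset.mem_univ i)).1, (hcoeff i (Finset.mem_univ i)).2]
    · filter_upwards [eventually_gt_atTop 0] with x hx
      rw [← dotProduct_sigmaRow_exp]
      exact hzero (one_lt_exp_iff.2 hx)
  · exact ae_restrict_le_codiscreteWithin measurableSet_Ioi hne

theorem ae_sigmaRow_notMem (hβ : Set.InjOn β (Set.Iio k)) (V : Submodule ℝ (Fin (2 * k) → ℝ))
    (hV : V ≠ ⊤) : ∀ᵐ t ∂(volume.restrict (Set.Ioi 1)), sigmaRow k β t ∉ V := by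
  obtain ⟨φ, hφ, hVφ⟩ := V.exists_le_ker_of_lt_top hV.lt_top
  have ha : (dotProductEquiv ℝ _).symm φ ≠ 0 := by simpa using hφ
  filter_upwards [ae_dotProduct_sigmaRow_ne_zero hβ ha] with t ht hmem
  exact ht ((LinearMap.congr_fun ((dotProductEquiv ℝ _).apply_symm_apply φ) _).trans (hVφ hmem))

theorem det_sigmaMatrix_ne_zero (hk : 1 ≤ k) {vb : Fin (2 * k - 1) → ℝ}
    (hli : LinearIndependent ℝ (sigmaRow k β ∘ Fin.cons 1 vb)) :
    (sigmaMatrix k β fun l =>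
      if l = 0 then 1 else if h : l - 1 < 2 * k - 1 then vb ⟨l - 1, h⟩ else 0).det ≠ 0 := by
  have h2k : 2 * k = 2 * k - 1 + 1 := by omega
  rw [← isUnit_iff_ne_zero, ← Matrix.isUnit_iff_isUnit_det,
    ← Matrix.linearIndependent_rows_iff_isUnit]
  refine (linearIndependent_equiv' (finCongr h2k) (funext fun l => ?_)).2 hli
  obtain ⟨_ | l, hl⟩ := l
  · rfl
  · change sigmaRow k β (Fin.cons (α := fun _ => ℝ) 1 vb (Fin.succ ⟨l, by omega⟩)) =
      sigmaRow k β (if l + 1 = 0 then 1 else _)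
    rw [Fin.cons_succ, if_neg l.succ_ne_zero, dif_pos (by omega)]
    rfl

end SigmaRow

theorem sigmaMatrix_ae_invertible_general
    (k : ℕ) (hk : 1 ≤ k) (β : ℕ → ℝ)
    (hanti : ∀ i j, i < j → j < k → β j < β i) :
    volume {vb : Fin (2 * k - 1) → ℝ |
      (∀ j, 1 < vb j) ∧
      (sigmaMatrix k β (fun l =>
        if l = 0 then 1
        else if h : l - 1 < 2 * k - 1 then vb ⟨l - 1, h⟩ else 0)).det = 0} = 0 := by
  have hβ : Set.InjOn β (Set.Iio k) := StrictAntiOn.injOn fun i _ j hj hij => hanti i j hij hj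
  have hli := ae_linearIndependent_comp_cons (μ := volume.restrict (Set.Ioi 1))
    measurable_sigmaRow (ae_sigmaRow_notMem hβ) (sigmaRow_one_ne_zero hk) (m := 2 * k - 1)
    (by rw [finrank_fin_fun]; omega)
  rw [← Measure.restrict_pi_pi, ← volume_pi,
    ae_restrict_iff' (MeasurableSet.univ_pi fun _ => measurableSet_Ioi)] at hli
  refine measure_mono_null (fun vb ⟨hgt, hdet⟩ => ?_) (ae_iff.1 hli)
  exact fun hvb => det_sigmaMatrix_ne_zero hk (hvb (Set.mem_univ_pi.2 hgt)) hdet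

theorem sigmaMatrix_ae_invertible
    (k : ℕ) (hk : 1 ≤ k) (β : ℕ → ℝ)
    (hβ2 : β 0 < 2) (hβnn : 0 ≤ β (k - 1))
    (hanti : ∀ i j, i < j → j < k → β j < β i) :
    volume {vb : Fin (2 * k - 1) → ℝ |
      (∀ j, 1 < vb j) ∧
      (sigmaMatrix k β (fun l =>
        if l = 0 then 1
        else if h : l - 1 < 2 * k - 1 then vb ⟨l - 1, h⟩ else 0)).det = 0} = 0 :=
  sigmaMatrix_ae_invertible_general k hk β hanti
end

section
/- Let 0 < β_1 < 2 and β_1/2 ≤ β_j < β_1, let A_−, ε > 0, and let f, g : ℝ → [0, ∞) be measurable functions satisfying |f(x) − 1| ≥ A_−·|x|^{β_1 − β_j} and g(x) ≥ A_−·|x|^{−1−β_1} for all x with 0 < |x| < ε, and additionally |f(x) − 1| ≤ 1 for 0 < |x| < ε. Then ∫_{−ε}^{ε} (|f(x) − 1|^2 ∧ |f(x) − 1|) · g(x) dx = +∞. -/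
/-! Since `|f x - 1| ≤ 1`, the integrand is `|f x - 1| ^ 2 * g x ≥ A ^ 3 * x ^ (β₁ - 2 * βj - 1)` on
`(0, ε)`, and `βj ≥ β₁ / 2` makes this exponent `≤ -1`, which is not integrable at `0`. -/

open MeasureTheory Set
open scoped ENNReal

lemma lintegral_Ioo_zero_rpow_eq_top {c ε : ℝ} (hε : 0 < ε) (hc : c ≤ -1) :
    ∫⁻ x in Ioo 0 ε, ENNReal.ofReal (x ^ c) = ⊤ := by
  by_contra hfin
  have hmeas : AEStronglyMeasurable (fun x : ℝ => x ^ c) (volume.restrict (Ioo 0 ε)) :=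
    ContinuousOn.aestronglyMeasurable (fun x hx =>
      (Real.continuousAt_rpow_const x c (Or.inl hx.1.ne')).continuousWithinAt) measurableSet_Ioo
  have hnonneg : 0 ≤ᵐ[volume.restrict (Ioo 0 ε)] fun x : ℝ => x ^ c := by
    filter_upwards [ae_restrict_mem measurableSet_Ioo] with x hx
    exact Real.rpow_nonneg hx.1.le c
  have hint : IntegrableOn (fun x : ℝ => x ^ c) (Ioo 0 ε) :=
    (lintegral_ofReal_ne_top_iff_integrable hmeas hnonneg).mp hfin
  linarith [(intervalIntegral.integrableOn_Ioo_rpow_iff hε).mp hint]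

lemma lintegral_Ioo_zero_eq_top_of_rpow_le {F : ℝ → ℝ} {C c ε : ℝ} (hC : 0 < C) (hε : 0 < ε)
    (hc : c ≤ -1) (hF : ∀ x ∈ Ioo 0 ε, C * x ^ c ≤ F x) :
    ∫⁻ x in Ioo 0 ε, ENNReal.ofReal (F x) = ⊤ := by
  refine eq_top_iff.mpr ?_
  calc ⊤ = ENNReal.ofReal C * ∫⁻ x in Ioo 0 ε, ENNReal.ofReal (x ^ c) := by
        rw [lintegral_Ioo_zero_rpow_eq_top hε hc, ENNReal.mul_top (by simpa using hC)]
    _ = ∫⁻ x in Ioo 0 ε, ENNReal.ofReal (C * x ^ c) := by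
        rw [← lintegral_const_mul' _ _ ENNReal.ofReal_ne_top]
        simp only [ENNReal.ofReal_mul hC.le]
    _ ≤ ∫⁻ x in Ioo 0 ε, ENNReal.ofReal (F x) :=
        setLIntegral_mono' measurableSet_Ioo fun x hx => ENNReal.ofReal_le_ofReal (hF x hx)

lemma sq_mul_le_min_sq_self_mul {a b s t : ℝ} (ha : 0 ≤ a) (hb : 0 ≤ b) (hat : a ≤ t)
    (ht : t ≤ 1) (hbs : b ≤ s) : a ^ 2 * b ≤ min (t ^ 2) t * s := by
  rw [min_eq_left (pow_le_of_le_one (ha.trans hat) ht two_ne_zero)]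
  gcongr

theorem lintegral_min_eq_top_of_lower_bounds_general
    (β₁ βj A ε : ℝ)
    (hβj1 : β₁ / 2 ≤ βj) (hA : 0 < A) (hε : 0 < ε)
    (f g : ℝ → ℝ)
    (hflow : ∀ x : ℝ, x ≠ 0 → |x| < ε → A * |x| ^ (β₁ - βj) ≤ |f x - 1|)
    (hglow : ∀ x : ℝ, x ≠ 0 → |x| < ε → A * |x| ^ (-(1 + β₁)) ≤ g x)
    (hfle : ∀ x : ℝ, x ≠ 0 → |x| < ε → |f x - 1| ≤ 1) :
    ∫⁻ x in Set.Ioo (-ε) ε,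
      ENNReal.ofReal (min (|f x - 1| ^ 2) |f x - 1| * g x) = ⊤ := by
  have hpos : ∫⁻ x in Ioo 0 ε, ENNReal.ofReal (min (|f x - 1| ^ 2) |f x - 1| * g x) = ⊤ := by
    refine lintegral_Ioo_zero_eq_top_of_rpow_le (pow_pos hA 3) hε
      (c := β₁ - 2 * βj - 1) (by linarith) fun x ⟨hx0, hxε⟩ => ?_
    have hx : |x| = x := abs_of_pos hx0
    have hxε' : |x| < ε := by rwa [hx]
    have hfx : A * x ^ (β₁ - βj) ≤ |f x - 1| := by simpa only [hx] using hflow x hx0.ne' hxε'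
    have hgx : A * x ^ (-(1 + β₁)) ≤ g x := by simpa only [hx] using hglow x hx0.ne' hxε'
    calc A ^ 3 * x ^ (β₁ - 2 * βj - 1)
        = (A * x ^ (β₁ - βj)) ^ 2 * (A * x ^ (-(1 + β₁))) := by
          rw [show β₁ - 2 * βj - 1 = (β₁ - βj) + ((β₁ - βj) + -(1 + β₁)) by ring,
            Real.rpow_add hx0, Real.rpow_add hx0]
          ring
      _ ≤ min (|f x - 1| ^ 2) |f x - 1| * g x :=
          sq_mul_le_min_sq_self_mul (by positivity) (by positivity) hfx (hfle x hx0.ne' hxε') hgx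
  exact eq_top_iff.mpr (hpos.symm.trans_le
    (lintegral_mono_set (Ioo_subset_Ioo_left (neg_lt_zero.mpr hε).le)))

theorem lintegral_min_eq_top_of_lower_bounds
    (β₁ βj A ε : ℝ) (hβ₁0 : 0 < β₁) (hβ₁2 : β₁ < 2)
    (hβj1 : β₁ / 2 ≤ βj) (hβj2 : βj < β₁) (hA : 0 < A) (hε : 0 < ε)
    (f g : ℝ → ℝ) (hf : Measurable f) (hg : Measurable g)
    (hfnn : ∀ x, 0 ≤ f x) (hgnn : ∀ x, 0 ≤ g x)
    (hflow : ∀ x : ℝ, x ≠ 0 → |x| < ε → A * |x| ^ (β₁ - βj) ≤ |f x - 1|)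
    (hglow : ∀ x : ℝ, x ≠ 0 → |x| < ε → A * |x| ^ (-(1 + β₁)) ≤ g x)
    (hfle : ∀ x : ℝ, x ≠ 0 → |x| < ε → |f x - 1| ≤ 1) :
    ∫⁻ x in Set.Ioo (-ε) ε,
      ENNReal.ofReal (min (|f x - 1| ^ 2) |f x - 1| * g x) = ⊤ :=
  lintegral_min_eq_top_of_lower_bounds_general β₁ βj A ε hβj1 hA hε f g hflow hglow hfle
end
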